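/- arXiv:2511.20205 — 3 statements merged into one kernel-verified Lean document; each statement's English description precedes it below -/
import Mathlib

section
/- Let n ≥ 3, 0 < q < 1, λ > 0, and x₀ ∈ ℝⁿ. Then the function U_{λ,x₀} is positive and twice continuously differentiable on ℝⁿ, and it satisfies −ΔU_{λ,x₀}(x) = U_{λ,x₀}(x)^{2^*(q)−1} ‖∇U_{λ,x₀}(x)‖^q for every x ∈ ℝⁿ. -/
open MeasureTheory

noncomputable section

/-- The `i`-th partial derivative of `g : ℝⁿ → ℝ`. -/
def pd (n : ℕ) (i : Fin n) (g : EuclideanSpace ℝ (Fin n) → ℝ)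
    (x : EuclideanSpace ℝ (Fin n)) : ℝ :=
  fderiv ℝ g x (EuclideanSpace.single i (1 : ℝ))

/-- The squared Euclidean norm of the gradient of `g`. -/
def gsq (n : ℕ) (g : EuclideanSpace ℝ (Fin n) → ℝ)
    (x : EuclideanSpace ℝ (Fin n)) : ℝ :=
  ∑ i, (pd n i g x) ^ 2

/-- The Euclidean norm of the gradient of `g`. -/
def gnorm (n : ℕ) (g : EuclideanSpace ℝ (Fin n) → ℝ)
    (x : EuclideanSpace ℝ (Fin n)) : ℝ :=
  Real.sqrt (gsq n g x)

/-- The Laplacian of `g` (trace of the Hessian). -/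
def lap (n : ℕ) (g : EuclideanSpace ℝ (Fin n) → ℝ)
    (x : EuclideanSpace ℝ (Fin n)) : ℝ :=
  ∑ i, pd n i (pd n i g) x

/-- The second critical exponent `2^*(q) = ((2-q)/(n-2))(n + q/(1-q))`. -/
def twoStar (n : ℕ) (q : ℝ) : ℝ :=
  (2 - q) / ((n : ℝ) - 2) * ((n : ℝ) + q / (1 - q))

/-- The explicit family of radial solutions `U_{λ,x₀}`. -/
def Ufun (n : ℕ) (q lam : ℝ) (x₀ x : EuclideanSpace ℝ (Fin n)) : ℝ :=
  ((((n : ℝ) + q / (1 - q)) ^ (1 / (2 - q)) * ((n : ℝ) - 2) ^ ((1 - q) / (2 - q)) * lam)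
      / (1 + (lam * ‖x - x₀‖) ^ ((2 - q) / (1 - q)))) ^ (((n : ℝ) - 2) * (1 - q) / (2 - q))

/-!
With `α = (2 - q)/(1 - q) > 2`, `β = (n - 2)/α` and `c = λ^α`, the function is
`U = P ∘ a` for the profile `P t = K (1 + c t)^(-β)` and `a x = ‖x - x₀‖^α`, where
`K = C^β` and `C` is the constant in the numerator of `U`.
Since `α - 2 > 0`, the gradient `∇a (x) = α ‖y‖^(α-2) y` (`y = x - x₀`) is still `C¹`
(its derivative is `O(‖y‖^(α-2))` at `y = 0`), so `U` is `C²`.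
The chain rule gives `ΔU = P''(a) |∇a|² + P'(a) Δa` with `|∇a| = α ‖y‖^(α-1)` and
`Δa = α (α - 2 + n) ‖y‖^(α-2)`; the identity `(β + 1) α = α - 2 + n` collapses `-ΔU` to a
single monomial `K (n-2) (n + q/(1-q)) c (1 + c ‖y‖^α)^(-β-2) ‖y‖^(α-2)`, and the exponent
relation `β (2^*(q) - 2 + q) = 2 - q` shows that `U^(2^*(q)-1) |∇U|^q` is the same monomial.
-/

open Filter Topology Asymptotics

section NormRpow

variable {E : Type*} [NormedAddCommGroup E] [InnerProductSpace ℝ E]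

theorem hasFDerivAt_norm_rpow_of_ne_zero {x : E} (hx : x ≠ 0) (r : ℝ) :
    HasFDerivAt (fun y : E ↦ ‖y‖ ^ r) ((r * ‖x‖ ^ (r - 2)) • innerSL ℝ x) x := by
  convert ((hasStrictFDerivAt_norm_sq x).rpow_const (p := r / 2)
    (by simp [hx])).hasFDerivAt using 1
  · ext y
    rw [← Real.rpow_natCast, ← Real.rpow_mul (norm_nonneg _)]
    ring_nf
  · simp_rw [← Real.rpow_natCast_mul (norm_nonneg _), ← Nat.cast_smul_eq_nsmul ℝ, smul_smul]
    ring_nf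

-- At `x = 0` the second term vanishes, whatever junk value `0 ^ (r - 2)` takes.
theorem hasFDerivAt_norm_rpow_smul (x : E) {r : ℝ} (hr : 0 < r) :
    HasFDerivAt (fun y : E ↦ ‖y‖ ^ r • y)
      (‖x‖ ^ r • ContinuousLinearMap.id ℝ E + (r * ‖x‖ ^ (r - 2)) • (innerSL ℝ x).smulRight x)
      x := by
  by_cases hx : x = 0
  · subst hx
    simp only [map_zero, ContinuousLinearMap.zero_smulRight, smul_zero, norm_zero,
      Real.zero_rpow hr.ne', zero_smul, add_zero]
    refine .of_isLittleO ?_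
    have h : Tendsto (fun y : E ↦ ‖y‖ ^ r) (𝓝 0) (𝓝 0) := by
      simpa [Real.zero_rpow hr.ne'] using
        (continuous_norm.rpow_const fun _ ↦ Or.inr hr.le).tendsto (0 : E)
    simpa using (isLittleO_one_iff ℝ |>.mpr h).smul_isBigO (isBigO_refl (fun y : E ↦ y) _)
  · refine ((hasFDerivAt_norm_rpow_of_ne_zero hx r).smul (hasFDerivAt_id x)).congr_fderiv ?_
    ext y
    simp [smul_smul]

theorem norm_rpow_smulRight_add_le (x : E) {r : ℝ} (hr : 0 < r) :
    ‖‖x‖ ^ r • ContinuousLinearMap.id ℝ E + (r * ‖x‖ ^ (r - 2)) • (innerSL ℝ x).smulRight x‖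
      ≤ (r + 1) * ‖x‖ ^ r := by
  have hsq : ‖x‖ ^ (r - 2) * (‖x‖ * ‖x‖) = ‖x‖ ^ r := by
    rw [← sq, ← Real.rpow_natCast, ← Real.rpow_add' (norm_nonneg _) (by norm_num; linarith)]
    norm_num
  calc _ ≤ ‖x‖ ^ r * 1 + r * ‖x‖ ^ (r - 2) * (‖x‖ * ‖x‖) := by
        refine (norm_add_le _ _).trans (add_le_add ?_ ?_)
        · rw [norm_smul, Real.norm_of_nonneg (by positivity)]
          gcongr
          exact ContinuousLinearMap.norm_id_le
        · rw [norm_smul, ContinuousLinearMap.norm_smulRight_apply, innerSL_apply_norm,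
            Real.norm_of_nonneg (by positivity)]
    _ = (r + 1) * ‖x‖ ^ r := by rw [mul_assoc, hsq]; ring

theorem contDiff_norm_rpow_smul {r : ℝ} (hr : 0 < r) : ContDiff ℝ 1 (fun y : E ↦ ‖y‖ ^ r • y) := by
  refine contDiff_one_iff_hasFDerivAt.mpr ⟨_, ?_, fun x ↦ hasFDerivAt_norm_rpow_smul x hr⟩
  refine continuous_iff_continuousAt.mpr fun x ↦ ?_
  by_cases hx : x = 0
  · subst hx
    simp only [ContinuousAt, map_zero, ContinuousLinearMap.zero_smulRight, smul_zero, norm_zero,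
      Real.zero_rpow hr.ne', zero_smul, add_zero]
    refine squeeze_zero_norm (fun y ↦ norm_rpow_smulRight_add_le y hr) ?_
    simpa [Real.zero_rpow hr.ne'] using
      ((continuous_norm.rpow_const fun _ ↦ Or.inr hr.le).const_mul (r + 1)).tendsto (0 : E)
  · have hx' : ‖x‖ ≠ 0 := norm_ne_zero_iff.mpr hx
    have hsr : Continuous fun y : E ↦ (innerSL ℝ y).smulRight y :=
      ((ContinuousLinearMap.smulRightL ℝ E E).continuous.comp (innerSL ℝ).continuous).clm_apply
        continuous_id
    exact ((continuous_norm.rpow_const fun _ ↦ Or.inr hr.le).continuousAt.smul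
      continuousAt_const).add <|
        ((continuous_norm.continuousAt.rpow_const (Or.inl hx')).const_mul r).smul hsr.continuousAt

theorem contDiff_two_norm_rpow {p : ℝ} (hp : 2 < p) : ContDiff ℝ 2 (fun x : E ↦ ‖x‖ ^ p) := by
  rw [show (2 : WithTop ℕ∞) = 1 + 1 by norm_num, contDiff_succ_iff_fderiv]
  refine ⟨differentiable_norm_rpow (by linarith), by simp, ?_⟩
  have hfd : fderiv ℝ (fun x : E ↦ ‖x‖ ^ p) = fun x ↦ p • innerSL ℝ (‖x‖ ^ (p - 2) • x) := by
    ext x : 1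
    rw [fderiv_norm_rpow x (by linarith), map_smul, smul_smul]
  rw [hfd]
  exact ((innerSL ℝ).contDiff.comp (contDiff_norm_rpow_smul (by linarith))).const_smul p

end NormRpow

section EuclideanCalculus

variable {n : ℕ}

local notation "ℝⁿ" => EuclideanSpace ℝ (Fin n)

theorem gnorm_eq_norm_fderiv (g : ℝⁿ → ℝ) (x : ℝⁿ) : gnorm n g x = ‖fderiv ℝ g x‖ := by
  have hpd : ∀ i, pd n i g x = (InnerProductSpace.toDual ℝ ℝⁿ).symm (fderiv ℝ g x) i := fun i ↦ by
    rw [pd, ← InnerProductSpace.toDual_symm_apply, EuclideanSpace.inner_single_right]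
    simp
  rw [← LinearIsometryEquiv.norm_map (InnerProductSpace.toDual ℝ ℝⁿ).symm, gnorm, gsq,
    EuclideanSpace.norm_eq]
  simp [hpd]

theorem pd_comp {F : ℝ → ℝ} {f' : ℝ} {a : ℝⁿ → ℝ} {x : ℝⁿ} (hF : HasDerivAt F f' (a x))
    (ha : DifferentiableAt ℝ a x) (i : Fin n) : pd n i (F ∘ a) x = f' * pd n i a x := by
  simp [pd, (hF.comp_hasFDerivAt x ha.hasFDerivAt).fderiv]

theorem gnorm_comp {F : ℝ → ℝ} {f' : ℝ} {a : ℝⁿ → ℝ} {x : ℝⁿ} (hF : HasDerivAt F f' (a x))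
    (ha : DifferentiableAt ℝ a x) : gnorm n (F ∘ a) x = |f'| * gnorm n a x := by
  simp [gnorm_eq_norm_fderiv, (hF.comp_hasFDerivAt x ha.hasFDerivAt).fderiv, norm_smul]

theorem gsq_eq_gnorm_sq (g : ℝⁿ → ℝ) (x : ℝⁿ) : gsq n g x = gnorm n g x ^ 2 :=
  (Real.sq_sqrt (Finset.sum_nonneg fun _ _ ↦ sq_nonneg _)).symm

theorem differentiable_pd {g : ℝⁿ → ℝ} (hg : ContDiff ℝ 2 g) (i : Fin n) :
    Differentiable ℝ (pd n i g) :=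
  ((hg.fderiv_right (m := 1) (by norm_num)).differentiable one_ne_zero).clm_apply
    (differentiable_const _)

theorem lap_comp {F F' : ℝ → ℝ} {f'' : ℝ} {a : ℝⁿ → ℝ} {x : ℝⁿ}
    (hF : ∀ y, HasDerivAt F (F' (a y)) (a y)) (hF' : HasDerivAt F' f'' (a x))
    (ha : ContDiff ℝ 2 a) :
    lap n (F ∘ a) x = f'' * gsq n a x + F' (a x) * lap n a x := by
  have hpd : ∀ i, pd n i (F ∘ a) = fun y ↦ F' (a y) * pd n i a y := fun i ↦
    funext fun y ↦ pd_comp (hF y) (ha.differentiable two_ne_zero y) i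
  have hpd2 : ∀ i, pd n i (pd n i (F ∘ a)) x
      = f'' * pd n i a x * pd n i a x + F' (a x) * pd n i (pd n i a) x := fun i ↦ by
    have hd : HasFDerivAt (fun y ↦ F' (a y) * pd n i a y) _ x :=
      (hF'.comp_hasFDerivAt x (ha.differentiable two_ne_zero x).hasFDerivAt).mul
        (differentiable_pd ha i x).hasFDerivAt
    rw [hpd i, pd, hd.fderiv]
    simp only [Function.comp_apply, pd, add_apply,
      smul_apply, smul_eq_mul]
    ring
  simp only [lap, gsq, hpd2, Finset.sum_add_distrib, Finset.mul_sum]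
  exact congrArg₂ _ (Finset.sum_congr rfl fun i _ ↦ by ring) rfl

variable {p : ℝ}

theorem contDiff_two_norm_sub_rpow (x₀ : ℝⁿ) (hp : 2 < p) :
    ContDiff ℝ 2 (fun y : ℝⁿ ↦ ‖y - x₀‖ ^ p) :=
  (contDiff_two_norm_rpow hp).comp (contDiff_id.sub contDiff_const)

theorem gnorm_norm_sub_rpow (x₀ : ℝⁿ) (hp : 1 < p) (x : ℝⁿ) :
    gnorm n (fun y : ℝⁿ ↦ ‖y - x₀‖ ^ p) x = p * ‖x - x₀‖ ^ (p - 1) := by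
  rw [gnorm_eq_norm_fderiv, fderiv_comp_sub (f := fun y : ℝⁿ ↦ ‖y‖ ^ p),
    norm_fderiv_norm_id_rpow _ hp]

theorem pd_norm_sub_rpow (x₀ : ℝⁿ) (hp : 1 < p) (i : Fin n) :
    pd n i (fun y : ℝⁿ ↦ ‖y - x₀‖ ^ p) = fun y ↦ p * (‖y - x₀‖ ^ (p - 2) • (y - x₀)) i := by
  ext y
  rw [pd, fderiv_comp_sub (f := fun y : ℝⁿ ↦ ‖y‖ ^ p), fderiv_norm_rpow _ hp]
  simp only [smul_apply, innerSL_apply_apply,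
    EuclideanSpace.inner_single_right, PiLp.smul_apply, Real.ringHom_apply, one_mul, smul_eq_mul]
  ring

theorem lap_norm_sub_rpow (x₀ : ℝⁿ) (hp : 2 < p) (x : ℝⁿ) :
    lap n (fun y : ℝⁿ ↦ ‖y - x₀‖ ^ p) x = p * (p - 2 + n) * ‖x - x₀‖ ^ (p - 2) := by
  have hG := (hasFDerivAt_comp_sub x₀).mpr
    (hasFDerivAt_norm_rpow_smul (x - x₀) (r := p - 2) (by linarith))
  have hpd2 : ∀ i, pd n i (pd n i (fun y : ℝⁿ ↦ ‖y - x₀‖ ^ p)) x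
      = p * (‖x - x₀‖ ^ (p - 2) + (p - 2) * ‖x - x₀‖ ^ (p - 2 - 2) * (x - x₀) i ^ 2) := fun i ↦ by
    have hd : HasFDerivAt (fun y ↦ p * (‖y - x₀‖ ^ (p - 2) • (y - x₀)) i) _ x :=
      ((EuclideanSpace.proj i).hasFDerivAt.comp x hG).const_mul p
    rw [pd_norm_sub_rpow x₀ (by linarith), pd, hd.fderiv]
    simp only [ContinuousLinearMap.comp_add, ContinuousLinearMap.comp_smulₛₗ,
      ContinuousLinearMap.comp_id, smul_add, add_apply, smul_apply, PiLp.proj_apply,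
      PiLp.single_eq_same, ContinuousLinearMap.comp_apply, ContinuousLinearMap.smulRight_apply,
      innerSL_apply_apply, EuclideanSpace.inner_single_right, map_smul, Real.ringHom_apply,
      smul_eq_mul, mul_one, one_mul]
    ring
  have hsq : ‖x - x₀‖ ^ (p - 2 - 2) * ‖x - x₀‖ ^ 2 = ‖x - x₀‖ ^ (p - 2) := by
    rw [← Real.rpow_natCast, ← Real.rpow_add' (norm_nonneg _) (by norm_num; linarith)]
    norm_num
  simp only [lap, hpd2, ← Finset.mul_sum, Finset.sum_add_distrib, Finset.sum_const,
    Finset.card_univ, Fintype.card_fin, nsmul_eq_mul, ← EuclideanSpace.real_norm_sq_eq]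
  linear_combination p * (p - 2) * hsq

end EuclideanCalculus


namespace Bubble

section Profile

variable {K c β t : ℝ}

def profile (K c β t : ℝ) : ℝ := K * (1 + c * t) ^ (-β)

theorem hasDerivAt_profile (ht : 1 + c * t ≠ 0) :
    HasDerivAt (profile K c β) (profile (-(β * K * c)) c (β + 1) t) t := by
  have h := ((Real.hasDerivAt_rpow_const (p := -β) (Or.inl ht)).comp t
    (((hasDerivAt_id t).const_mul c).const_add 1)).const_mul K
  refine HasDerivAt.congr_deriv (f := profile K c β) h ?_
  rw [profile, show -(β + 1) = -β - 1 by ring]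
  ring

theorem contDiffAt_profile {k : WithTop ℕ∞} (ht : 1 + c * t ≠ 0) :
    ContDiffAt ℝ k (profile K c β) t :=
  contDiffAt_const.mul <| (Real.contDiffAt_rpow_const_of_ne ht).comp t <|
    contDiffAt_const.add (contDiffAt_const.mul contDiffAt_id)

end Profile

def alpha (q : ℝ) : ℝ := (2 - q) / (1 - q)

def beta (n : ℕ) (q : ℝ) : ℝ := ((n : ℝ) - 2) * (1 - q) / (2 - q)

def scale (n : ℕ) (q lam : ℝ) : ℝ :=
  ((n : ℝ) + q / (1 - q)) ^ (1 / (2 - q)) * ((n : ℝ) - 2) ^ ((1 - q) / (2 - q)) * lam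

variable {n : ℕ} {q lam : ℝ}

theorem nat_add_div_one_sub_pos (hn : 3 ≤ n) (hq1 : q < 1) : 0 < (n : ℝ) + q / (1 - q) := by
  have hn' : (3 : ℝ) ≤ n := by exact_mod_cast hn
  have h1q : 0 < 1 - q := by linarith
  rw [show (n : ℝ) + q / (1 - q) = n - 1 + 1 / (1 - q) by field_simp; ring]
  have := one_div_pos.mpr h1q
  linarith

theorem scale_pos (hn : 3 ≤ n) (hq1 : q < 1) (hlam : 0 < lam) : 0 < scale n q lam := by
  have hn' : (3 : ℝ) ≤ n := by exact_mod_cast hn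
  have hS := nat_add_div_one_sub_pos hn hq1
  have hn2 : (0 : ℝ) < n - 2 := by linarith
  unfold scale
  positivity

theorem Ufun_eq_profile_comp (hn : 3 ≤ n) (hq1 : q < 1) (hlam : 0 < lam)
    (x₀ : EuclideanSpace ℝ (Fin n)) :
    Ufun n q lam x₀ = profile (scale n q lam ^ beta n q) (lam ^ alpha q) (beta n q) ∘
      fun x ↦ ‖x - x₀‖ ^ alpha q := by
  ext x
  have hden : 0 ≤ 1 + (lam * ‖x - x₀‖) ^ alpha q := by positivity
  change (scale n q lam / (1 + (lam * ‖x - x₀‖) ^ alpha q)) ^ beta n q = _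
  rw [Real.div_rpow (scale_pos hn hq1 hlam).le hden, Real.mul_rpow hlam.le (norm_nonneg _),
    Function.comp_apply, profile, Real.rpow_neg (by positivity), div_eq_mul_inv]

theorem two_lt_alpha (hq0 : 0 < q) (hq1 : q < 1) : 2 < alpha q := by
  rw [alpha, lt_div_iff₀ (by linarith)]
  linarith

theorem beta_pos (hn : 3 ≤ n) (hq1 : q < 1) : 0 < beta n q := by
  have hn' : (3 : ℝ) ≤ n := by exact_mod_cast hn
  exact div_pos (mul_pos (by linarith) (by linarith)) (by linarith)

theorem beta_mul_alpha (hq1 : q < 1) : beta n q * alpha q = n - 2 := by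
  have : 1 - q ≠ 0 := by linarith
  have : 2 - q ≠ 0 := by linarith
  rw [beta, alpha]
  field_simp

theorem alpha_sub_two (hq1 : q < 1) : alpha q - 2 = q / (1 - q) := by
  have : 1 - q ≠ 0 := by linarith
  rw [alpha]
  field_simp
  ring

theorem alpha_sub_one_mul (hq1 : q < 1) : (alpha q - 1) * q = alpha q - 2 := by
  have : 1 - q ≠ 0 := by linarith
  rw [alpha]
  field_simp
  ring

theorem alpha_mul_add (hq1 : q < 1) : alpha q * q + (2 - q) = alpha q := by
  have : 1 - q ≠ 0 := by linarith
  rw [alpha]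
  field_simp
  ring

theorem beta_mul_twoStar (hn : 3 ≤ n) (hq1 : q < 1) : beta n q * (twoStar n q - 2 + q) = 2 - q := by
  have hn' : (3 : ℝ) ≤ n := by exact_mod_cast hn
  have : 1 - q ≠ 0 := by linarith
  have : 2 - q ≠ 0 := by linarith
  have : (n : ℝ) - 2 ≠ 0 := by linarith
  rw [beta, twoStar]
  field_simp
  ring

theorem scale_rpow (hn : 3 ≤ n) (hq1 : q < 1) (hlam : 0 < lam) :
    scale n q lam ^ (2 - q) =
      ((n : ℝ) + q / (1 - q)) * ((n : ℝ) - 2) ^ (1 - q) * lam ^ (2 - q) := by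
  have hn' : (3 : ℝ) ≤ n := by exact_mod_cast hn
  have hS := nat_add_div_one_sub_pos hn hq1
  have hn2 : (0 : ℝ) ≤ n - 2 := by linarith
  have h2q : 2 - q ≠ 0 := by linarith
  rw [scale, Real.mul_rpow (by positivity) hlam.le, Real.mul_rpow (by positivity) (by positivity),
    ← Real.rpow_mul hS.le, ← Real.rpow_mul hn2, one_div_mul_cancel h2q, Real.rpow_one,
    div_mul_cancel₀ _ h2q]

theorem neg_lap_Ufun (hn : 3 ≤ n) (hq0 : 0 < q) (hq1 : q < 1) (hlam : 0 < lam)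
    (x₀ x : EuclideanSpace ℝ (Fin n)) :
    -lap n (Ufun n q lam x₀) x = scale n q lam ^ beta n q * ((n : ℝ) - 2) *
      ((n : ℝ) + q / (1 - q)) * lam ^ alpha q *
      (1 + lam ^ alpha q * ‖x - x₀‖ ^ alpha q) ^ (-(beta n q + 2)) * ‖x - x₀‖ ^ (alpha q - 2) := by
  have hα := two_lt_alpha hq0 hq1
  have hpos : ∀ y : EuclideanSpace ℝ (Fin n), 1 + lam ^ alpha q * ‖y - x₀‖ ^ alpha q ≠ 0 :=
    fun y ↦ by positivity
  rw [Ufun_eq_profile_comp hn hq1 hlam, lap_comp (fun y ↦ hasDerivAt_profile (hpos y))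
    (hasDerivAt_profile (hpos x)) (contDiff_two_norm_sub_rpow x₀ hα), gsq_eq_gnorm_sq,
    gnorm_norm_sub_rpow x₀ (by linarith), lap_norm_sub_rpow x₀ hα]
  simp only [profile, mul_pow, show -(beta n q + 1 + 1) = -(beta n q + 2) by ring]
  set r := ‖x - x₀‖
  set s := 1 + lam ^ alpha q * r ^ alpha q
  have hs : 0 < s := by positivity
  have hs1 : s ^ (-(beta n q + 1)) = s ^ (-(beta n q + 2)) * s := by
    rw [← Real.rpow_add_one hs.ne']; ring_nf
  have hr1 : (r ^ (alpha q - 1)) ^ 2 = r ^ (alpha q - 2) * r ^ alpha q := by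
    rw [← Real.rpow_natCast, ← Real.rpow_mul (norm_nonneg _),
      ← Real.rpow_add' (norm_nonneg _) (by norm_num; linarith)]
    ring_nf
  rw [hr1, hs1]
  linear_combination (scale n q lam ^ beta n q * lam ^ alpha q * s ^ (-(beta n q + 2)) *
      r ^ (alpha q - 2)) * (((alpha q - 2 + n) - lam ^ alpha q * r ^ alpha q * beta n q * alpha q) *
      beta_mul_alpha hq1 + ((n : ℝ) - 2) * alpha_sub_two hq1)

theorem Ufun_rpow_mul_gnorm_rpow (hn : 3 ≤ n) (hq0 : 0 < q) (hq1 : q < 1) (hlam : 0 < lam)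
    (x₀ x : EuclideanSpace ℝ (Fin n)) :
    Ufun n q lam x₀ x ^ (twoStar n q - 1) * gnorm n (Ufun n q lam x₀) x ^ q =
      scale n q lam ^ beta n q * ((n : ℝ) - 2) * ((n : ℝ) + q / (1 - q)) * lam ^ alpha q *
      (1 + lam ^ alpha q * ‖x - x₀‖ ^ alpha q) ^ (-(beta n q + 2)) * ‖x - x₀‖ ^ (alpha q - 2) := by
  have hα := two_lt_alpha hq0 hq1
  have hβ := beta_pos hn hq1
  have hC := scale_pos hn hq1 hlam
  have hn' : (3 : ℝ) ≤ n := by exact_mod_cast hn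
  have hn2 : (0 : ℝ) < n - 2 := by linarith
  have hpos : 1 + lam ^ alpha q * ‖x - x₀‖ ^ alpha q ≠ 0 := by positivity
  rw [Ufun_eq_profile_comp hn hq1 hlam, Function.comp_apply,
    gnorm_comp (hasDerivAt_profile hpos)
      ((contDiff_two_norm_sub_rpow x₀ hα).differentiable two_ne_zero x),
    gnorm_norm_sub_rpow x₀ (by linarith)]
  simp only [profile]
  set r := ‖x - x₀‖
  set s := 1 + lam ^ alpha q * r ^ alpha q
  have hs : 0 < s := by positivity
  have hgrad : |-(beta n q * scale n q lam ^ beta n q * lam ^ alpha q) * s ^ (-(beta n q + 1))| *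
      (alpha q * r ^ (alpha q - 1)) = (beta n q * alpha q) * scale n q lam ^ beta n q *
      lam ^ alpha q * (s ^ (-(beta n q + 1)) * r ^ (alpha q - 1)) := by
    rw [abs_mul, abs_neg, abs_of_pos (by positivity), abs_of_pos (by positivity)]
    ring
  rw [hgrad, beta_mul_alpha hq1]
  simp (disch := positivity) only [Real.mul_rpow, ← Real.rpow_mul]
  have hCexp : beta n q * (twoStar n q - 1) + beta n q * q = beta n q + (2 - q) := by
    linear_combination beta_mul_twoStar hn hq1
  have hsexp : -beta n q * (twoStar n q - 1) + -(beta n q + 1) * q = -(beta n q + 2) := by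
    linear_combination -beta_mul_twoStar hn hq1
  calc _ = scale n q lam ^ (beta n q * (twoStar n q - 1) + beta n q * q) *
        (s ^ (-beta n q * (twoStar n q - 1) + -(beta n q + 1) * q)) * ((n : ℝ) - 2) ^ q *
        lam ^ (alpha q * q) * r ^ ((alpha q - 1) * q) := by
        rw [Real.rpow_add hC, Real.rpow_add hs]
        ring
    _ = scale n q lam ^ beta n q * scale n q lam ^ (2 - q) * s ^ (-(beta n q + 2)) *
        ((n : ℝ) - 2) ^ q * lam ^ (alpha q * q) * r ^ (alpha q - 2) := by
        rw [hCexp, hsexp, alpha_sub_one_mul hq1, Real.rpow_add hC]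
    _ = _ := by
        have hlamα : lam ^ alpha q = lam ^ (2 - q) * lam ^ (alpha q * q) := by
          rw [← Real.rpow_add hlam, add_comm, alpha_mul_add hq1]
        rw [scale_rpow hn hq1 hlam, hlamα]
        have hn2q : ((n : ℝ) - 2) ^ (1 - q) * ((n : ℝ) - 2) ^ q = (n : ℝ) - 2 := by
          rw [← Real.rpow_add hn2, sub_add_cancel, Real.rpow_one]
        linear_combination (scale n q lam ^ beta n q * ((n : ℝ) + q / (1 - q)) *
          lam ^ (2 - q) * lam ^ (alpha q * q) * s ^ (-(beta n q + 2)) * r ^ (alpha q - 2)) * hn2q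

theorem Ufun_pos (hn : 3 ≤ n) (hq1 : q < 1) (hlam : 0 < lam) (x₀ x : EuclideanSpace ℝ (Fin n)) :
    0 < Ufun n q lam x₀ x := by
  have := scale_pos hn hq1 hlam
  change 0 < (scale n q lam / (1 + (lam * ‖x - x₀‖) ^ alpha q)) ^ beta n q
  positivity

theorem contDiff_Ufun (hn : 3 ≤ n) (hq0 : 0 < q) (hq1 : q < 1) (hlam : 0 < lam)
    (x₀ : EuclideanSpace ℝ (Fin n)) : ContDiff ℝ 2 (Ufun n q lam x₀) := by
  rw [Ufun_eq_profile_comp hn hq1 hlam]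
  refine contDiff_iff_contDiffAt.mpr fun x ↦ ?_
  exact (contDiffAt_profile (by positivity)).comp x
    (contDiff_two_norm_sub_rpow x₀ (two_lt_alpha hq0 hq1)).contDiffAt

end Bubble

/-- The function `U_{λ,x₀}` is a positive `C²` solution of the second critical
equation `-ΔU = U^{2^*(q)-1}|∇U|^q` on `ℝⁿ`. -/
theorem stmt_7 (n : ℕ) (hn : 3 ≤ n) (q : ℝ) (hq0 : 0 < q) (hq1 : q < 1)
    (lam : ℝ) (hlam : 0 < lam) (x₀ : EuclideanSpace ℝ (Fin n)) :
    (∀ x, 0 < Ufun n q lam x₀ x) ∧ ContDiff ℝ 2 (Ufun n q lam x₀) ∧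
      ∀ x, -lap n (Ufun n q lam x₀) x
        = Ufun n q lam x₀ x ^ (twoStar n q - 1) * gnorm n (Ufun n q lam x₀) x ^ q :=
  ⟨Bubble.Ufun_pos hn hq1 hlam x₀, Bubble.contDiff_Ufun hn hq0 hq1 hlam x₀, fun x ↦
    (Bubble.neg_lap_Ufun hn hq0 hq1 hlam x₀ x).trans
      (Bubble.Ufun_rpow_mul_gnorm_rpow hn hq0 hq1 hlam x₀ x).symm⟩
end
end

section
/- Let n ≥ 1 and let E be a symmetric real n×n matrix with trace zero. Then for every vector v ∈ ℝⁿ, ‖E v‖² ≤ ((n−1)/n) ‖E‖_F² ‖v‖², where E v is the matrix–vector product, ‖·‖ is the Euclidean norm, and ‖E‖_F² = Σ_{i,j} E_{ij}² is the squared Frobenius norm. -/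
open Finset

set_option maxHeartbeats 800000

private lemma key8 (n : ℕ) (hn : 2 ≤ n) (E : Matrix (Fin n) (Fin n) ℝ)
    (hsymm : ∀ i j, E i j = E j i) (htr : ∑ i, E i i = 0) (u v : Fin n → ℝ) :
    (∑ j, (∑ i, E i j * v i) * u j) ^ 2
      ≤ ((n : ℝ) - 1) / n * (∑ i, ∑ j, (E i j) ^ 2) *
        ((∑ i, (u i) ^ 2) * (∑ i, (v i) ^ 2)) := by
  have hn0 : (0:ℝ) < n := by
    have : (0:ℕ) < n := by omega
    exact_mod_cast this
  set t : ℝ := ∑ i, u i * v i with ht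
  set U : ℝ := ∑ i, (u i)^2 with hU
  set V : ℝ := ∑ i, (v i)^2 with hV
  set F : ℝ := ∑ i, ∑ j, (E i j)^2 with hF
  set c : ℝ := t / n with hc
  set C : Fin n → Fin n → ℝ :=
    fun i j => (u i * v j + v i * u j)/2 - (if i = j then c else 0) with hC
  have swap : ∑ i, ∑ j, E i j * (u i * v j) = ∑ i, ∑ j, E i j * (v i * u j) := by
    rw [Finset.sum_comm]
    refine Finset.sum_congr rfl fun i _ => Finset.sum_congr rfl fun j _ => ?_
    rw [hsymm]; ring
  have diag : ∑ i, ∑ j, E i j * (if i = j then c else 0) = 0 := by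
    have : ∀ i : Fin n, ∑ j, E i j * (if i = j then c else 0) = E i i * c := by
      intro i
      simp [mul_ite, Finset.sum_ite_eq, Finset.mem_univ]
    simp only [this]
    rw [← Finset.sum_mul, htr, zero_mul]
  have h1 : ∑ p : Fin n × Fin n, E p.1 p.2 * C p.1 p.2
      = ∑ j, (∑ i, E i j * v i) * u j := by
    have e1 : ∀ i j : Fin n, E i j * C i j
        = (E i j * (u i * v j)) * (1/2) + (E i j * (v i * u j)) * (1/2)
          - E i j * (if i = j then c else 0) := by
      intro i j; simp only [hC]; ring
    rw [Fintype.sum_prod_type]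
    calc ∑ i, ∑ j, E i j * C i j
        = (∑ i, ∑ j, E i j * (u i * v j)) * (1/2)
          + (∑ i, ∑ j, E i j * (v i * u j)) * (1/2)
          - ∑ i, ∑ j, E i j * (if i = j then c else 0) := by
          simp only [e1, Finset.sum_add_distrib, Finset.sum_sub_distrib, ← Finset.sum_mul]
      _ = ∑ i, ∑ j, E i j * (v i * u j) := by rw [swap, diag]; ring
      _ = ∑ j, (∑ i, E i j * v i) * u j := by
          rw [Finset.sum_comm]
          refine Finset.sum_congr rfl fun j _ => ?_
          rw [Finset.sum_mul]
          refine Finset.sum_congr rfl fun i _ => by ring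
  have huv : ∑ i, ∑ j, (u i)^2 * (v j)^2 = U * V := by
    rw [hU, hV, Finset.sum_mul_sum]
  have htt : ∑ i, ∑ j, (u i * v i) * (u j * v j) = t^2 := by
    rw [ht, sq, Finset.sum_mul_sum]
  have hvu : ∑ i, ∑ j, (v i)^2 * (u j)^2 = U * V := by
    rw [hU, hV, mul_comm U V, Finset.sum_mul_sum]
  have h2 : ∑ p : Fin n × Fin n, (C p.1 p.2)^2 = (U*V + t^2)/2 - t^2/n := by
    have e2 : ∀ i j : Fin n, (C i j)^2
        = (u i)^2 * (v j)^2 * (1/4) + ((u i * v i) * (u j * v j)) * (1/2)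
          + (v i)^2 * (u j)^2 * (1/4)
          - ((u i * v j + v i * u j)) * (if i = j then c else 0)
          + (if i = j then c^2 else 0) := by
      intro i j; by_cases h : i = j <;> simp only [hC, h, if_true, if_false] <;> ring
    have diag2 : ∑ i, ∑ j, ((u i * v j + v i * u j)) * (if i = j then c else 0)
        = 2 * t * c := by
      have : ∀ i : Fin n, ∑ j, ((u i * v j + v i * u j)) * (if i = j then c else 0)
          = (u i * v i) * (2 * c) := by
        intro i
        simp [mul_ite, Finset.sum_ite_eq, Finset.mem_univ]
        ring
      simp only [this]
      rw [← Finset.sum_mul, ← ht]; ring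
    have diag3 : ∑ i : Fin n, ∑ j, (if i = j then c^2 else 0) = n * c^2 := by
      simp [Finset.sum_ite_eq, Finset.mem_univ, Finset.card_univ]
    rw [Fintype.sum_prod_type]
    calc ∑ i, ∑ j, (C i j)^2
        = (∑ i, ∑ j, (u i)^2 * (v j)^2) * (1/4)
          + (∑ i, ∑ j, (u i * v i) * (u j * v j)) * (1/2)
          + (∑ i, ∑ j, (v i)^2 * (u j)^2) * (1/4)
          - ∑ i, ∑ j, ((u i * v j + v i * u j)) * (if i = j then c else 0)
          + ∑ i : Fin n, ∑ j : Fin n, (if i = j then c^2 else 0) := by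
          simp only [e2, Finset.sum_add_distrib, Finset.sum_sub_distrib, ← Finset.sum_mul]
      _ = (U*V + t^2)/2 - t^2/n := by
          rw [huv, htt, hvu, diag2, diag3, hc]
          field_simp
          ring
  have hFp : ∑ p : Fin n × Fin n, (E p.1 p.2)^2 = F := by
    rw [hF, Fintype.sum_prod_type]
  have hCS := Finset.sum_mul_sq_le_sq_mul_sq univ
    (fun p : Fin n × Fin n => E p.1 p.2) (fun p => C p.1 p.2)
  rw [h1, hFp, h2] at hCS
  have ht2 : t^2 ≤ U * V := by
    have := Finset.sum_mul_sq_le_sq_mul_sq univ u v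
    rwa [← ht, ← hU, ← hV] at this
  have hF0 : 0 ≤ F := by
    rw [hF]; positivity
  have hUV : 0 ≤ U * V := by
    have : (0:ℝ) ≤ U := by rw [hU]; positivity
    have : (0:ℝ) ≤ V := by rw [hV]; positivity
    positivity
  refine hCS.trans ?_
  have hkey : (U*V + t^2)/2 - t^2/n ≤ ((n:ℝ)-1)/n * (U*V) := by
    have h12 : (0:ℝ) ≤ 1/2 - 1/n := by
      have h2n : (2:ℝ) ≤ n := by exact_mod_cast hn
      have := one_div_le_one_div_of_le (by norm_num : (0:ℝ) < 2) h2n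
      linarith
    have : (U*V + t^2)/2 - t^2/n = U*V/2 + t^2 * (1/2 - 1/n) := by ring
    rw [this]
    have h2' : t^2 * (1/2 - 1/n) ≤ U*V * (1/2 - 1/n) :=
      mul_le_mul_of_nonneg_right ht2 h12
    have : ((n:ℝ)-1)/n * (U*V) = U*V/2 + U*V*(1/2-1/n) := by
      field_simp; ring
    rw [this]
    linarith
  calc F * ((U*V + t^2)/2 - t^2/n) ≤ F * (((n:ℝ)-1)/n * (U*V)) :=
        mul_le_mul_of_nonneg_left hkey hF0
    _ = ((n:ℝ)-1)/n * F * (U * V) := by ring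

/-- If `E` is a symmetric trace-free real `n×n` matrix, then for every `v ∈ ℝⁿ`,
`‖E v‖² ≤ ((n-1)/n) ‖E‖_F² ‖v‖²`. -/
theorem stmt_8 (n : ℕ) (hn : 1 ≤ n) (E : Matrix (Fin n) (Fin n) ℝ)
    (hsymm : ∀ i j, E i j = E j i) (htr : ∑ i, E i i = 0) (v : Fin n → ℝ) :
    ∑ j, (∑ i, E i j * v i) ^ 2
      ≤ ((n : ℝ) - 1) / (n : ℝ) * (∑ i, ∑ j, (E i j) ^ 2) * (∑ i, (v i) ^ 2) := by
  rcases Nat.lt_or_ge n 2 with h | h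
  · -- n = 1
    interval_cases n
    have h0 : E 0 0 = 0 := by simpa using htr
    simp [Fin.sum_univ_one, h0]
  · set u : Fin n → ℝ := fun j => ∑ i, E i j * v i with hu
    set S : ℝ := ∑ j, (u j)^2 with hS
    have hS0 : 0 ≤ S := by rw [hS]; positivity
    rcases eq_or_lt_of_le hS0 with hS0' | hS0'
    · rw [hS] at hS0'
      have hV0 : (0:ℝ) ≤ ((n:ℝ)-1)/n * (∑ i, ∑ j, (E i j)^2) * (∑ i, (v i)^2) := by
        have hn0 : (0:ℝ) < n := by exact_mod_cast (by omega : 0 < n)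
        have h1 : (0:ℝ) ≤ ((n:ℝ)-1)/n := by
          apply div_nonneg _ hn0.le
          have : (1:ℝ) ≤ n := by exact_mod_cast hn
          linarith
        positivity
      calc ∑ j, (∑ i, E i j * v i)^2 = S := by simp only [hS, hu]
        _ = 0 := hS0'.symm
        _ ≤ _ := hV0
    · have hk := key8 n h E hsymm htr u v
      have heq : ∑ j, (∑ i, E i j * v i) * u j = S := by
        rw [hS]
        exact Finset.sum_congr rfl fun j _ => by rw [hu]; ring
      rw [heq] at hk
      -- hk : S^2 ≤ (n-1)/n * F * (S * V)
      have hmul : S * S ≤ ((n:ℝ)-1)/n * (∑ i, ∑ j, (E i j)^2) * (∑ i, (v i)^2) * S := by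
        calc S * S = S^2 := (sq S).symm
          _ ≤ _ := hk.trans_eq (by ring)
      have hfin := le_of_mul_le_mul_right hmul hS0'
      calc ∑ j, (∑ i, E i j * v i)^2 = S := by simp only [hS, hu]
        _ ≤ _ := hfin
end

section
/- Let n ≥ 3, q > 0, and let f : (0,∞) → (0,∞) be continuously differentiable. Let u be a positive C³ function on ℝⁿ satisfying −Δu = f(u)‖∇u‖^q on ℝⁿ. Let a : (0,∞) → (0,∞) be continuously differentiable and let c, β, d ∈ ℝ. On the open set where ∇u ≠ 0 define E_ij = ∂ᵢ∂ⱼu − ∂ᵢu ∂ⱼu / a(u) + c (Δu/‖∇u‖²) ∂ᵢu ∂ⱼu − (1/n)((1+c)Δu − ‖∇u‖²/a(u)) δ_ij. Then at every point where ∇u ≠ 0: u^{−β} ‖∇u‖^{−d} div( u^{β} ‖∇u‖^{d} E·∇u ) = |E|² + (d/‖∇u‖²) |E·∇u|² + ( β/u + (2+(n−1)d)/(n a(u)) ) ⟨E·∇u, ∇u⟩ + ( ((n−1)(1+c)q)/n − 2c − ((n−1)c−1)d/n ) (Δu/‖∇u‖²) ⟨E·∇u, ∇u⟩ + ((n−1)/n)(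 a′(u) − (n−2)/n ) ‖∇u‖⁴/a(u)² + ((n−1)/n²)(1+c)( q + (n−(n−1)q)c )(Δu)² − ((n−1)/n)( (1+c) f′(u) − (1 + ((2−(n−1)q)/n)(1+c)) f(u)/a(u) ) ‖∇u‖^{2+q}. -/
open MeasureTheory

noncomputable section

/-- The invariant tensor
`E_ij = ∂ᵢ∂ⱼu − ∂ᵢu ∂ⱼu/a(u) + c (Δu/|∇u|²) ∂ᵢu ∂ⱼu − (1/n)((1+c)Δu − |∇u|²/a(u)) δ_ij`. -/
def Emat (n : ℕ) (a : ℝ → ℝ) (c : ℝ) (u : EuclideanSpace ℝ (Fin n) → ℝ)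
    (x : EuclideanSpace ℝ (Fin n)) (i j : Fin n) : ℝ :=
  pd n i (pd n j u) x - pd n i u x * pd n j u x / a (u x)
    + c * (lap n u x / gsq n u x) * (pd n i u x * pd n j u x)
    - (1 / (n : ℝ)) * ((1 + c) * lap n u x - gsq n u x / a (u x))
        * (if i = j then (1 : ℝ) else 0)


/-!
Write `p = ∇u`, `H = D²u` and `m = H p`. The tensor is `E = H + λ p pᵀ − μ I`, so
`E·∇u = m + κ p` with `κ = λ |p|² − μ`, and `|E|²`, `|E·∇u|²`, `⟨E·∇u, p⟩` are polynomials in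
the scalars `|H|²`, `|m|²`, `⟨m, p⟩`, `|p|²`, `Δu`. For the weight `φ = u^β |p|^d`,
`φ⁻¹ div (φ X) = ⟨β p / u + d m / |p|², X⟩ + div X`, and Bochner's formula
`div m = |H|² + ⟨p, ∇Δu⟩` expresses `div (m + κ p)` through the same scalars and `⟨p, ∇Δu⟩`.
Differentiating the equation `Δu = -f(u) |p|^q` gives
`⟨p, ∇Δu⟩ = -f'(u) |p|^(q+2) - q f(u) |p|^(q-2) ⟨m, p⟩`, after which both sides are the same
rational function of these scalars.
-/

def HasPartialsAt {n : ℕ} (g : EuclideanSpace ℝ (Fin n) → ℝ) (v : Fin n → ℝ)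
    (x : EuclideanSpace ℝ (Fin n)) : Prop :=
  ∃ D : EuclideanSpace ℝ (Fin n) →L[ℝ] ℝ, HasFDerivAt g D x ∧
    ∀ j, D (EuclideanSpace.single j 1) = v j

namespace HasPartialsAt

variable {n : ℕ} {g h : EuclideanSpace ℝ (Fin n) → ℝ} {x : EuclideanSpace ℝ (Fin n)}
  {v w : Fin n → ℝ}

theorem pd_eq (hg : HasPartialsAt g v x) (j : Fin n) : pd n j g x = v j := by
  obtain ⟨D, hD, hv⟩ := hg
  rw [pd, hD.fderiv, hv]

theorem differentiableAt (hg : HasPartialsAt g v x) : DifferentiableAt ℝ g x :=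
  let ⟨_, hD, _⟩ := hg
  hD.differentiableAt

theorem _root_.DifferentiableAt.hasPartialsAt (hg : DifferentiableAt ℝ g x) :
    HasPartialsAt g (fun j => pd n j g x) x :=
  ⟨fderiv ℝ g x, hg.hasFDerivAt, fun _ => rfl⟩

theorem congr_partials (hg : HasPartialsAt g v x) (hvw : ∀ j, v j = w j) :
    HasPartialsAt g w x :=
  funext hvw ▸ hg

theorem const (r : ℝ) : HasPartialsAt (fun _ => r) (fun _ => 0) x :=
  ⟨0, hasFDerivAt_const r x, fun _ => rfl⟩

theorem add (hg : HasPartialsAt g v x) (hh : HasPartialsAt h w x) :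
    HasPartialsAt (fun y => g y + h y) (fun j => v j + w j) x := by
  obtain ⟨D, hD, hv⟩ := hg; obtain ⟨D', hD', hw⟩ := hh
  exact ⟨D + D', hD.add hD', fun j => by simp [hv, hw]⟩

theorem neg (hg : HasPartialsAt g v x) : HasPartialsAt (fun y => -g y) (fun j => -v j) x := by
  obtain ⟨D, hD, hv⟩ := hg
  exact ⟨-D, hD.neg, fun j => by simp [hv]⟩

theorem sub (hg : HasPartialsAt g v x) (hh : HasPartialsAt h w x) :
    HasPartialsAt (fun y => g y - h y) (fun j => v j - w j) x := by
  obtain ⟨D, hD, hv⟩ := hg; obtain ⟨D', hD', hw⟩ := hh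
  exact ⟨D - D', hD.sub hD', fun j => by simp [hv, hw]⟩

theorem mul (hg : HasPartialsAt g v x) (hh : HasPartialsAt h w x) :
    HasPartialsAt (fun y => g y * h y) (fun j => g x * w j + h x * v j) x := by
  obtain ⟨D, hD, hv⟩ := hg; obtain ⟨D', hD', hw⟩ := hh
  exact ⟨g x • D' + h x • D, hD.mul hD', fun j => by simp [hv, hw]⟩

theorem const_mul (hg : HasPartialsAt g v x) (r : ℝ) :
    HasPartialsAt (fun y => r * g y) (fun j => r * v j) x :=
  ((const r).mul hg).congr_partials fun j => by simp

theorem sum {ι : Type*} (s : Finset ι) {G : ι → EuclideanSpace ℝ (Fin n) → ℝ}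
    {V : ι → Fin n → ℝ} (hG : ∀ i ∈ s, HasPartialsAt (G i) (V i) x) :
    HasPartialsAt (fun y => ∑ i ∈ s, G i y) (fun j => ∑ i ∈ s, V i j) x := by
  classical
  induction s using Finset.induction_on with
  | empty => simpa using const 0
  | insert i s hi ih =>
    simp only [Finset.sum_insert hi]
    exact (hG i (s.mem_insert_self i)).add (ih fun k hk => hG k (Finset.mem_insert_of_mem hk))

theorem comp {φ : ℝ → ℝ} {φ' : ℝ} (hφ : HasDerivAt φ φ' (g x)) (hg : HasPartialsAt g v x) :
    HasPartialsAt (fun y => φ (g y)) (fun j => φ' * v j) x := by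
  obtain ⟨D, hD, hv⟩ := hg
  exact ⟨φ' • D, hφ.comp_hasFDerivAt x hD, fun j => by simp [hv]⟩

theorem div (hg : HasPartialsAt g v x) (hh : HasPartialsAt h w x) (hx : h x ≠ 0) :
    HasPartialsAt (fun y => g y / h y) (fun j => (h x * v j - g x * w j) / h x ^ 2) x :=
  (hg.mul (comp (hasDerivAt_inv hx) hh)).congr_partials fun j => by field_simp; ring

theorem rpow (hg : HasPartialsAt g v x) (hx : g x ≠ 0) (r : ℝ) :
    HasPartialsAt (fun y => g y ^ r) (fun j => r * g x ^ (r - 1) * v j) x :=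
  comp (Real.hasDerivAt_rpow_const (Or.inl hx)) hg

end HasPartialsAt

section RankOnePerturbation

variable {n : ℕ} (m p : Fin n → ℝ)

theorem sum_add_mul_mul (κ : ℝ) :
    ∑ j, (m j + κ * p j) * p j = ∑ j, m j * p j + κ * ∑ j, p j ^ 2 := by
  rw [Finset.mul_sum, ← Finset.sum_add_distrib]
  exact Finset.sum_congr rfl fun j _ => by ring

theorem sum_add_mul_sq (κ : ℝ) :
    ∑ j, (m j + κ * p j) ^ 2
      = ∑ j, m j ^ 2 + 2 * κ * ∑ j, m j * p j + κ ^ 2 * ∑ j, p j ^ 2 := by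
  simp only [Finset.mul_sum, ← Finset.sum_add_distrib]
  exact Finset.sum_congr rfl fun j _ => by ring

variable (H : Fin n → Fin n → ℝ) (l μ : ℝ)

theorem sum_add_rankOne_sub_smul_one_mul (j : Fin n) :
    ∑ i, (H i j + l * (p i * p j) - μ * if i = j then 1 else 0) * p i
      = ∑ i, H i j * p i + (l * ∑ i, p i ^ 2 - μ) * p j := by
  have hδ : ∑ i, (μ * if i = j then 1 else 0) * p i = μ * p j := by simp
  rw [sub_mul (l * _) μ, ← hδ, Finset.mul_sum, Finset.sum_mul, ← Finset.sum_sub_distrib,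
    ← Finset.sum_add_distrib]
  exact Finset.sum_congr rfl fun i _ => by ring

theorem sum_sq_add_rankOne_sub_smul_one :
    ∑ i, ∑ j, (H i j + l * (p i * p j) - μ * if i = j then 1 else 0) ^ 2
      = ∑ i, ∑ j, H i j ^ 2 + 2 * l * ∑ j, (∑ i, H i j * p i) * p j
        + l ^ 2 * (∑ i, p i ^ 2) ^ 2 - 2 * μ * ∑ i, H i i - 2 * l * μ * ∑ i, p i ^ 2
        + n * μ ^ 2 := by
  have hδ : ∀ i, ∑ j, (μ * if i = j then 1 else 0) * (μ - 2 * H i j - 2 * l * (p i * p j))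
      = μ * (μ - 2 * H i i - 2 * l * p i ^ 2) := fun i => by simp [sq]
  have hexp : ∀ i j, (H i j + l * (p i * p j) - μ * if i = j then 1 else 0) ^ 2
      = H i j ^ 2 + 2 * l * (H i j * p i * p j) + l ^ 2 * (p i ^ 2 * p j ^ 2)
        + (μ * if i = j then 1 else 0) * (μ - 2 * H i j - 2 * l * (p i * p j)) := by
    intro i j; split_ifs <;> ring
  simp only [hexp, Finset.sum_add_distrib, hδ]
  have hcross : ∑ i, ∑ j, 2 * l * (H i j * p i * p j) = 2 * l * ∑ j, (∑ i, H i j * p i) * p j := by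
    rw [Finset.sum_comm, Finset.mul_sum]
    simp only [Finset.sum_mul, Finset.mul_sum]
  have hquartic : ∑ i, ∑ j, l ^ 2 * (p i ^ 2 * p j ^ 2) = l ^ 2 * (∑ i, p i ^ 2) ^ 2 := by
    rw [sq (∑ i, p i ^ 2), Finset.sum_mul_sum]
    simp only [Finset.mul_sum]
  have hdiag : ∑ i, μ * (μ - 2 * H i i - 2 * l * p i ^ 2)
      = n * μ ^ 2 - 2 * μ * ∑ i, H i i - 2 * l * μ * ∑ i, p i ^ 2 := by
    simp only [mul_sub, Finset.sum_sub_distrib, ← Finset.mul_sum, Finset.sum_const,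
      Finset.card_univ, Fintype.card_fin, nsmul_eq_mul]
    ring
  rw [hcross, hquartic, hdiag]
  ring

end RankOnePerturbation

section Calculus

variable {n : ℕ} {u : EuclideanSpace ℝ (Fin n) → ℝ} {x : EuclideanSpace ℝ (Fin n)}

theorem ContDiff.pd {m : WithTop ℕ∞} (hu : ContDiff ℝ (m + 1) u) (i : Fin n) :
    ContDiff ℝ m (pd n i u) :=
  (hu.fderiv_right le_rfl).clm_apply contDiff_const

theorem pd_pd_comm (hu : ContDiff ℝ 2 u) (i k : Fin n) (y : EuclideanSpace ℝ (Fin n)) :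
    pd n i (pd n k u) y = pd n k (pd n i u) y := by
  have hdiff : DifferentiableAt ℝ (fderiv ℝ u) y :=
    (hu.fderiv_right (m := 1) le_rfl).differentiable one_ne_zero y
  have hsecond : ∀ a b : Fin n, pd n a (pd n b u) y =
      fderiv ℝ (fderiv ℝ u) y (EuclideanSpace.single a 1) (EuclideanSpace.single b 1) := by
    intro a b
    rw [pd, show pd n b u = fun z => fderiv ℝ u z (EuclideanSpace.single b 1) from rfl,
      fderiv_clm_apply hdiff (differentiableAt_const _)]
    simp
  rw [hsecond, hsecond,
    hu.contDiffAt.isSymmSndFDerivAt (by simp [minSmoothness_of_isRCLikeNormedField])]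

variable (n) in
def hessGrad (u : EuclideanSpace ℝ (Fin n) → ℝ) (x : EuclideanSpace ℝ (Fin n)) (j : Fin n) : ℝ :=
  ∑ i, pd n i (pd n j u) x * pd n i u x

theorem hasPartialsAt_gsq (hu : ContDiff ℝ 2 u) :
    HasPartialsAt (gsq n u) (fun j => 2 * hessGrad n u x j) x := by
  have hp : ∀ i, HasPartialsAt (pd n i u) (fun j => pd n j (pd n i u) x) x := fun i =>
    ((hu.pd (m := 1) i).differentiable one_ne_zero x).hasPartialsAt
  refine (HasPartialsAt.sum Finset.univ fun i _ =>
    (hp i).comp (hasDerivAt_pow 2 _)).congr_partials fun j => ?_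
  simp only [hessGrad, Finset.mul_sum, pd_pd_comm hu j]
  exact Finset.sum_congr rfl fun i _ => by ring

theorem gsq_nonneg (y : EuclideanSpace ℝ (Fin n)) : 0 ≤ gsq n u y :=
  Finset.sum_nonneg fun _ _ => sq_nonneg _

theorem gnorm_pos (hx : gsq n u x ≠ 0) : 0 < gnorm n u x :=
  Real.sqrt_pos.mpr ((gsq_nonneg x).lt_of_ne' hx)

theorem hasPartialsAt_gnorm_rpow (hu : ContDiff ℝ 2 u) (hx : gsq n u x ≠ 0) (r : ℝ) :
    HasPartialsAt (fun y => gnorm n u y ^ r)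
      (fun j => r * gnorm n u x ^ r / gsq n u x * hessGrad n u x j) x := by
  have hg := (gnorm_pos hx).ne'
  refine (((hasPartialsAt_gsq hu).comp (Real.hasDerivAt_sqrt hx)).rpow hg r).congr_partials
    fun j => ?_
  change r * gnorm n u x ^ (r - 1) * (1 / (2 * gnorm n u x) * _) = _
  rw [Real.rpow_sub_one hg, ← Real.sq_sqrt (gsq_nonneg x), ← gnorm]
  field_simp

theorem ContDiff.lap {m : WithTop ℕ∞} (hu : ContDiff ℝ (m + 1 + 1) u) : ContDiff ℝ m (lap n u) :=
  ContDiff.sum fun i _ => (hu.pd i).pd i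

theorem pd_lap (hu : ContDiff ℝ 3 u) (i : Fin n) :
    pd n i (lap n u) x = ∑ j, pd n i (pd n j (pd n j u)) x :=
  (HasPartialsAt.sum Finset.univ fun j _ =>
    (((hu.pd (m := 2) j).pd (m := 1) j).differentiable one_ne_zero x).hasPartialsAt).pd_eq i

theorem ContDiff.hessGrad (hu : ContDiff ℝ 3 u) (j : Fin n) :
    ContDiff ℝ 1 (fun y => hessGrad n u y j) :=
  ContDiff.sum fun i _ => ((hu.pd (m := 2) j).pd i).mul ((hu.pd (m := 2) i).of_le (by norm_num))

theorem sum_pd_hessGrad (hu : ContDiff ℝ 3 u) :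
    ∑ j, pd n j (fun y => hessGrad n u y j) x
      = ∑ i, ∑ j, pd n i (pd n j u) x ^ 2 + ∑ i, pd n i u x * pd n i (lap n u) x := by
  have hu2 : ContDiff ℝ 2 u := hu.of_le (by norm_num)
  have hdiv : ∀ j, pd n j (fun y => hessGrad n u y j) x
      = ∑ i, (pd n i (pd n j u) x ^ 2 + pd n i u x * pd n i (pd n j (pd n j u)) x) := by
    intro j
    have hH : ∀ i, HasPartialsAt (pd n i (pd n j u)) (fun k => pd n k (pd n i (pd n j u)) x) x :=
      fun i => (((hu.pd (m := 2) j).pd (m := 1) i).differentiable one_ne_zero x).hasPartialsAt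
    have hp : ∀ i, HasPartialsAt (pd n i u) (fun k => pd n k (pd n i u) x) x := fun i =>
      ((hu2.pd (m := 1) i).differentiable one_ne_zero x).hasPartialsAt
    refine ((HasPartialsAt.sum Finset.univ fun i _ => (hH i).mul (hp i)).pd_eq j).trans
      (Finset.sum_congr rfl fun i _ => ?_)
    rw [pd_pd_comm hu2 j i, pd_pd_comm (hu.pd (m := 2) j) j i]
    ring
  simp only [hdiv, Finset.sum_add_distrib, pd_lap hu, Finset.mul_sum]
  congr 1 <;> exact Finset.sum_comm

theorem hasPartialsAt_rpow_mul_gnorm_rpow (hu : ContDiff ℝ 2 u) (hux : u x ≠ 0) (hW : gsq n u x ≠ 0)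
    (β d : ℝ) :
    HasPartialsAt (fun y => u y ^ β * gnorm n u y ^ d)
      (fun j => u x ^ β * gnorm n u x ^ d
        * (β * pd n j u x / u x + d * hessGrad n u x j / gsq n u x)) x := by
  have hpu := (hu.differentiable two_ne_zero x).hasPartialsAt
  refine ((hpu.rpow hux β).mul (hasPartialsAt_gnorm_rpow hu hW d)).congr_partials fun j => ?_
  rw [Real.rpow_sub_one hux]
  field_simp
  ring

theorem weighted_divergence (hu : ContDiff ℝ 3 u) (hux : 0 < u x) (hW : gsq n u x ≠ 0)
    {κ : EuclideanSpace ℝ (Fin n) → ℝ} (hκ : DifferentiableAt ℝ κ x) (β d : ℝ) :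
    u x ^ (-β) * gnorm n u x ^ (-d) * ∑ j, pd n j
        (fun y => u y ^ β * gnorm n u y ^ d * (hessGrad n u y j + κ y * pd n j u y)) x
      = β / u x * (∑ j, hessGrad n u x j * pd n j u x + κ x * gsq n u x)
        + d / gsq n u x * (∑ j, hessGrad n u x j ^ 2 + κ x * ∑ j, hessGrad n u x j * pd n j u x)
        + ∑ i, ∑ j, pd n i (pd n j u) x ^ 2 + ∑ j, pd n j u x * pd n j (lap n u) x
        + ∑ j, pd n j u x * pd n j κ x + κ x * lap n u x := by
  have hu2 : ContDiff ℝ 2 u := hu.of_le (by norm_num)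
  have hφ := hasPartialsAt_rpow_mul_gnorm_rpow hu2 hux.ne' hW β d
  have hX : ∀ j, HasPartialsAt (fun y => hessGrad n u y j + κ y * pd n j u y)
      (fun k => pd n k (fun y => hessGrad n u y j) x
        + (κ x * pd n k (pd n j u) x + pd n j u x * pd n k κ x)) x := fun j =>
    ((hu.hessGrad j).differentiable one_ne_zero x).hasPartialsAt.add
      (hκ.hasPartialsAt.mul (((hu2.pd j).differentiable one_ne_zero x).hasPartialsAt))
  have hcomponent : ∀ j, pd n j
      (fun y => u y ^ β * gnorm n u y ^ d * (hessGrad n u y j + κ y * pd n j u y)) x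
      = u x ^ β * gnorm n u x ^ d
        * ((β / u x * (hessGrad n u x j * pd n j u x + κ x * pd n j u x ^ 2)
          + d / gsq n u x * (hessGrad n u x j ^ 2 + κ x * (hessGrad n u x j * pd n j u x)))
          + (pd n j (fun y => hessGrad n u y j) x + κ x * pd n j (pd n j u) x
            + pd n j u x * pd n j κ x)) := fun j => by
    rw [(hφ.mul (hX j)).pd_eq j]
    ring
  simp only [hcomponent, ← Finset.mul_sum]
  have hg := gnorm_pos hW
  rw [← mul_assoc, Real.rpow_neg hux.le, Real.rpow_neg hg.le, ← mul_inv, inv_mul_cancel₀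
    (mul_pos (Real.rpow_pos_of_pos hux β) (Real.rpow_pos_of_pos hg d)).ne', one_mul]
  simp only [Finset.sum_add_distrib, ← Finset.mul_sum, sum_pd_hessGrad hu]
  rw [← gsq, ← lap]
  ring

theorem sum_pd_mul_pd_lap_of_pde (hu : ContDiff ℝ 2 u) (hW : gsq n u x ≠ 0) {f : ℝ → ℝ}
    {f' q : ℝ} (hf : HasDerivAt f f' (u x))
    (hpde : ∀ y, -lap n u y = f (u y) * gnorm n u y ^ q) :
    ∑ j, pd n j u x * pd n j (lap n u) x
      = -(f' * gnorm n u x ^ q * gsq n u x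
        + q * f (u x) * gnorm n u x ^ q / gsq n u x * ∑ j, hessGrad n u x j * pd n j u x) := by
  have hlap : lap n u = fun y => -(f (u y) * gnorm n u y ^ q) :=
    funext fun y => by rw [← hpde y, neg_neg]
  have hpu := (hu.differentiable two_ne_zero x).hasPartialsAt
  rw [hlap]
  simp only [((hpu.comp hf).mul (hasPartialsAt_gnorm_rpow hu hW q)).neg.pd_eq, gsq,
    Finset.mul_sum, ← Finset.sum_add_distrib, ← Finset.sum_neg_distrib]
  exact Finset.sum_congr rfl fun j _ => by ring

end Calculus

section Emat

variable (n : ℕ) (a : ℝ → ℝ) (c : ℝ) (u : EuclideanSpace ℝ (Fin n) → ℝ)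
  (x : EuclideanSpace ℝ (Fin n))

def rankOneCoeff : ℝ := c * (lap n u x / gsq n u x) - 1 / a (u x)

def idCoeff : ℝ := 1 / (n : ℝ) * ((1 + c) * lap n u x - gsq n u x / a (u x))

def gradCoeff : ℝ := rankOneCoeff n a c u x * gsq n u x - idCoeff n a c u x

theorem Emat_eq (i j : Fin n) :
    Emat n a c u x i j = pd n i (pd n j u) x + rankOneCoeff n a c u x * (pd n i u x * pd n j u x)
      - idCoeff n a c u x * if i = j then 1 else 0 := by
  rw [Emat, rankOneCoeff, idCoeff]
  ring

theorem sum_Emat_mul_pd (j : Fin n) :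
    ∑ i, Emat n a c u x i j * pd n i u x = hessGrad n u x j + gradCoeff n a c u x * pd n j u x := by
  simp only [Emat_eq]
  exact sum_add_rankOne_sub_smul_one_mul (pd n · u x) (fun i j => pd n i (pd n j u) x) _ _ j

theorem sum_Emat_mul_pd_mul_pd :
    ∑ j, (∑ i, Emat n a c u x i j * pd n i u x) * pd n j u x
      = ∑ j, hessGrad n u x j * pd n j u x + gradCoeff n a c u x * gsq n u x := by
  simp only [sum_Emat_mul_pd]
  exact sum_add_mul_mul (hessGrad n u x) (pd n · u x) _

theorem sum_sq_sum_Emat_mul_pd :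
    ∑ j, (∑ i, Emat n a c u x i j * pd n i u x) ^ 2
      = ∑ j, hessGrad n u x j ^ 2 + 2 * gradCoeff n a c u x * ∑ j, hessGrad n u x j * pd n j u x
        + gradCoeff n a c u x ^ 2 * gsq n u x := by
  simp only [sum_Emat_mul_pd]
  exact sum_add_mul_sq (hessGrad n u x) (pd n · u x) _

theorem sum_sq_Emat :
    ∑ i, ∑ j, Emat n a c u x i j ^ 2
      = ∑ i, ∑ j, pd n i (pd n j u) x ^ 2
        + 2 * rankOneCoeff n a c u x * ∑ j, hessGrad n u x j * pd n j u x
        + rankOneCoeff n a c u x ^ 2 * gsq n u x ^ 2 - 2 * idCoeff n a c u x * lap n u x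
        - 2 * rankOneCoeff n a c u x * idCoeff n a c u x * gsq n u x
        + n * idCoeff n a c u x ^ 2 := by
  simp only [Emat_eq]
  exact sum_sq_add_rankOne_sub_smul_one (pd n · u x) (fun i j => pd n i (pd n j u) x) _ _

end Emat

section GradCoeff

variable {n : ℕ} {u : EuclideanSpace ℝ (Fin n) → ℝ} {x : EuclideanSpace ℝ (Fin n)}

theorem hasPartialsAt_gradCoeff (hu : ContDiff ℝ 3 u) (hW : gsq n u x ≠ 0) {a : ℝ → ℝ} {a' : ℝ}
    (ha : HasDerivAt a a' (u x)) (hax : a (u x) ≠ 0) (c : ℝ) :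
    HasPartialsAt (gradCoeff n a c u)
      (fun j => (c - (1 + c) / n) * pd n j (lap n u) x
        - (1 - 1 / n) * (2 * hessGrad n u x j / a (u x)
          - gsq n u x * a' * pd n j u x / a (u x) ^ 2)) x := by
  have hu2 : ContDiff ℝ 2 u := hu.of_le (by norm_num)
  have hL := ((hu.lap (m := 1)).differentiable one_ne_zero x).hasPartialsAt
  have hW' := hasPartialsAt_gsq (x := x) hu2
  have ha' := ((hu.differentiable three_ne_zero x).hasPartialsAt).comp ha
  have hrankOne := ((hL.div hW' hW).const_mul c).sub ((HasPartialsAt.const 1).div ha' hax)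
  have hid := ((hL.const_mul (1 + c)).sub (hW'.div ha' hax)).const_mul (1 / (n : ℝ))
  exact ((hrankOne.mul hW').sub hid).congr_partials fun j => by
    field_simp
    ring

theorem sum_pd_mul_pd_gradCoeff (hu : ContDiff ℝ 3 u) (hW : gsq n u x ≠ 0) {a : ℝ → ℝ} {a' : ℝ}
    (ha : HasDerivAt a a' (u x)) (hax : a (u x) ≠ 0) (c : ℝ) :
    ∑ j, pd n j u x * pd n j (gradCoeff n a c u) x
      = (c - (1 + c) / n) * ∑ j, pd n j u x * pd n j (lap n u) x
        - (1 - 1 / n) * (2 * (∑ j, hessGrad n u x j * pd n j u x) / a (u x)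
          - gsq n u x ^ 2 * a' / a (u x) ^ 2) := by
  have hW2 : gsq n u x ^ 2 = gsq n u x * ∑ j, pd n j u x ^ 2 := sq _
  simp only [(hasPartialsAt_gradCoeff hu hW ha hax c).pd_eq, hW2, Finset.mul_sum, Finset.sum_mul,
    Finset.sum_div, ← Finset.sum_sub_distrib]
  exact Finset.sum_congr rfl fun j _ => by ring

end GradCoeff

theorem stmt_9_general (n : ℕ) (q : ℝ)
    (f f' : ℝ → ℝ)
    (hf' : ∀ v : ℝ, 0 < v → HasDerivAt f (f' v) v)
    (a a' : ℝ → ℝ)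
    (ha' : ∀ v : ℝ, 0 < v → HasDerivAt a (a' v) v)
    (hapos : ∀ v : ℝ, 0 < v → 0 < a v)
    (c β d : ℝ)
    (u : EuclideanSpace ℝ (Fin n) → ℝ) (hu : ContDiff ℝ 3 u) (hupos : ∀ x, 0 < u x)
    (heq : ∀ x, -lap n u x = f (u x) * gnorm n u x ^ q) :
    ∀ x, gsq n u x ≠ 0 →
      u x ^ (-β) * gnorm n u x ^ (-d) *
        (∑ j, pd n j
          (fun y => u y ^ β * gnorm n u y ^ d * ∑ i, Emat n a c u y i j * pd n i u y) x)
      = (∑ i, ∑ j, (Emat n a c u x i j) ^ 2)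
        + d / gsq n u x * (∑ j, (∑ i, Emat n a c u x i j * pd n i u x) ^ 2)
        + (β / u x + (2 + ((n : ℝ) - 1) * d) / ((n : ℝ) * a (u x)))
            * (∑ j, (∑ i, Emat n a c u x i j * pd n i u x) * pd n j u x)
        + (((n : ℝ) - 1) * (1 + c) * q / (n : ℝ) - 2 * c
            - (((n : ℝ) - 1) * c - 1) * d / (n : ℝ))
            * (lap n u x / gsq n u x)
            * (∑ j, (∑ i, Emat n a c u x i j * pd n i u x) * pd n j u x)
        + ((n : ℝ) - 1) / (n : ℝ) * (a' (u x) - ((n : ℝ) - 2) / (n : ℝ))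
            * (gsq n u x) ^ 2 / (a (u x)) ^ 2
        + ((n : ℝ) - 1) / (n : ℝ) ^ 2 * (1 + c)
            * (q + ((n : ℝ) - ((n : ℝ) - 1) * q) * c) * (lap n u x) ^ 2
        - ((n : ℝ) - 1) / (n : ℝ)
            * ((1 + c) * f' (u x)
              - (1 + (2 - ((n : ℝ) - 1) * q) / (n : ℝ) * (1 + c)) * f (u x) / a (u x))
            * gnorm n u x ^ (2 + q) := by
  intro x hW
  have hux := hupos x
  have hax := (hapos _ hux).ne'
  have hn : (n : ℝ) ≠ 0 := Nat.cast_ne_zero.mpr (by rintro rfl; exact hW (by simp [gsq]))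
  have hg := gnorm_pos hW
  have hlap : lap n u x = -(f (u x) * gnorm n u x ^ q) := by linarith [heq x]
  have hgnorm : gnorm n u x ^ (2 + q) = gsq n u x * gnorm n u x ^ q := by
    rw [Real.rpow_add hg, Real.rpow_two, gnorm, Real.sq_sqrt (gsq_nonneg x)]
  rw [sum_sq_Emat, sum_sq_sum_Emat_mul_pd, sum_Emat_mul_pd_mul_pd]
  simp only [sum_Emat_mul_pd]
  rw [weighted_divergence hu hux hW
      (hasPartialsAt_gradCoeff hu hW (ha' _ hux) hax c).differentiableAt,
    sum_pd_mul_pd_gradCoeff hu hW (ha' _ hux) hax,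
    sum_pd_mul_pd_lap_of_pde (hu.of_le (by norm_num)) hW (hf' _ hux) heq, hgnorm]
  simp only [gradCoeff, rankOneCoeff, idCoeff, hlap]
  field_simp
  ring

/-- The key differential identity for `-Δu = f(u)|∇u|^q` on Euclidean space. -/
theorem stmt_9 (n : ℕ) (hn : 3 ≤ n) (q : ℝ) (hq : 0 < q)
    (f f' : ℝ → ℝ)
    (hf' : ∀ v : ℝ, 0 < v → HasDerivAt f (f' v) v)
    (hf'cont : ContinuousOn f' (Set.Ioi 0))
    (hfpos : ∀ v : ℝ, 0 < v → 0 < f v)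
    (a a' : ℝ → ℝ)
    (ha' : ∀ v : ℝ, 0 < v → HasDerivAt a (a' v) v)
    (ha'cont : ContinuousOn a' (Set.Ioi 0))
    (hapos : ∀ v : ℝ, 0 < v → 0 < a v)
    (c β d : ℝ)
    (u : EuclideanSpace ℝ (Fin n) → ℝ) (hu : ContDiff ℝ 3 u) (hupos : ∀ x, 0 < u x)
    (heq : ∀ x, -lap n u x = f (u x) * gnorm n u x ^ q) :
    ∀ x, gsq n u x ≠ 0 →
      u x ^ (-β) * gnorm n u x ^ (-d) *
        (∑ j, pd n j
          (fun y => u y ^ β * gnorm n u y ^ d * ∑ i, Emat n a c u y i j * pd n i u y) x)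
      = (∑ i, ∑ j, (Emat n a c u x i j) ^ 2)
        + d / gsq n u x * (∑ j, (∑ i, Emat n a c u x i j * pd n i u x) ^ 2)
        + (β / u x + (2 + ((n : ℝ) - 1) * d) / ((n : ℝ) * a (u x)))
            * (∑ j, (∑ i, Emat n a c u x i j * pd n i u x) * pd n j u x)
        + (((n : ℝ) - 1) * (1 + c) * q / (n : ℝ) - 2 * c
            - (((n : ℝ) - 1) * c - 1) * d / (n : ℝ))
            * (lap n u x / gsq n u x)
            * (∑ j, (∑ i, Emat n a c u x i j * pd n i u x) * pd n j u x)
        + ((n : ℝ) - 1) / (n : ℝ) * (a' (u x) - ((n : ℝ) - 2) / (n : ℝ))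
            * (gsq n u x) ^ 2 / (a (u x)) ^ 2
        + ((n : ℝ) - 1) / (n : ℝ) ^ 2 * (1 + c)
            * (q + ((n : ℝ) - ((n : ℝ) - 1) * q) * c) * (lap n u x) ^ 2
        - ((n : ℝ) - 1) / (n : ℝ)
            * ((1 + c) * f' (u x)
              - (1 + (2 - ((n : ℝ) - 1) * q) / (n : ℝ) * (1 + c)) * f (u x) / a (u x))
            * gnorm n u x ^ (2 + q) :=
  stmt_9_general n q f f' hf' a a' ha' hapos c β d u hu hupos heq
end
end
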